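/- Let ε ~ N(0, σ²I_{n×n}), let h : ℝ^p → [0,+∞] be convex with the infimum t_c = inf{‖X(β−β*)‖ : h(β) < +∞} attained, and let t_f be the unique maximizer of f(t) = E[F(t)]. If for some s > 0 one has E[ sup_{β∈ℝ^p : ‖X(β−β*)‖ ≤ s} (εᵀX(β−β*) + h(β*) − h(β)) ] ≤ s² (equivalently f(s) + h(β*) ≤ s², assuming h(β*) < +∞), then t_f ≤ s. -/

import Mathlib

open MeasureTheory ProbabilityTheory
open scoped ENNReal NNReal

/-- Euclidean norm of a vector in `ℝ^k`. -/
noncomputable def l2norm {k : ℕ} (v : Fin k → ℝ) : ℝ := Real.sqrt (∑ i, (v i) ^ 2)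

/-- Euclidean inner product on `ℝ^k`. -/
noncomputable def dotp {k : ℕ} (u v : Fin k → ℝ) : ℝ := ∑ i, u i * v i

/-- The function `F(t) = sup_{β : ‖X(β-β*)‖ ≤ t} (εᵀX(β-β*) - h(β)) - t²/2`,
with values in `EReal` (the sup over the empty set is `⊥ = -∞`). -/
noncomputable def Fval {n p : ℕ} (X : Matrix (Fin n) (Fin p) ℝ) (bs : Fin p → ℝ)
    (h : (Fin p → ℝ) → ℝ≥0∞) (e : Fin n → ℝ) (t : ℝ) : EReal :=
  sSup {x : EReal | ∃ b : Fin p → ℝ, l2norm (X.mulVec (b - bs)) ≤ t ∧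
      x = (dotp e (X.mulVec (b - bs)) : EReal) - (h b : EReal)} - ((t ^ 2 / 2 : ℝ) : EReal)

/-- `t_c = inf {‖X(β-β*)‖ : h(β) < ∞}`. -/
noncomputable def tcrit {n p : ℕ} (X : Matrix (Fin n) (Fin p) ℝ) (bs : Fin p → ℝ)
    (h : (Fin p → ℝ) → ℝ≥0∞) : ℝ :=
  sInf {r : ℝ | ∃ b : Fin p → ℝ, h b ≠ ⊤ ∧ r = l2norm (X.mulVec (b - bs))}

/-- `f(t) = E[F(t)]`, with value `-∞` for `t < t_c`. -/
noncomputable def fInt {n p : ℕ} (X : Matrix (Fin n) (Fin p) ℝ) (bs : Fin p → ℝ)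
    (h : (Fin p → ℝ) → ℝ≥0∞) {Ω : Type*} [MeasurableSpace Ω] (P : Measure Ω)
    (ε : Ω → Fin n → ℝ) (t : ℝ) : EReal :=
  if t < tcrit X bs h then ⊥
  else ((∫ ω, (Fval X bs h (ε ω) t).toReal ∂P : ℝ) : EReal)

/-- The (real-valued) supremum `sup_{β : ‖X(β-β*)‖ ≤ s} (εᵀX(β-β*) + h(β*) - h(β))`;
vectors with `h(β) = ∞` contribute `-∞` and are discarded. -/
noncomputable def supShifted {n p : ℕ} (X : Matrix (Fin n) (Fin p) ℝ) (bs : Fin p → ℝ)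
    (h : (Fin p → ℝ) → ℝ≥0∞) (e : Fin n → ℝ) (s : ℝ) : ℝ :=
  sSup {x : ℝ | ∃ b : Fin p → ℝ, l2norm (X.mulVec (b - bs)) ≤ s ∧ h b ≠ ⊤ ∧
      x = dotp e (X.mulVec (b - bs)) + (h bs).toReal - (h b).toReal}


/-!
Write `Q(t)` for `supShifted X bs h ε t`. Since `h β* < ∞`, `t_c = 0` and
`F(t) = Q(t) - h(β*) - t²/2` for `t ≥ 0`. Convexity of `h` lets us shrink `β - β*` by the factor
`s / t ≤ 1`, which shows that `Q(t) / t` is nonincreasing, so `s E Q(t_f) ≤ t_f E Q(s)` when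
`s ≤ t_f`. If `t_f > s`, maximality of `f` at `t_f` gives
`E Q(s) - s²/2 ≤ E Q(t_f) - t_f²/2 ≤ (t_f / s) E Q(s) - t_f²/2`, and with `E Q(s) ≤ s²` this
forces `(t_f - s)² ≤ 0`. All expectations are finite because `0 ≤ Q(t) ≤ ‖ε‖ t + h(β*)` and
Gaussian vectors have integrable norm.
-/

lemma l2norm_nonneg {k : ℕ} (v : Fin k → ℝ) : 0 ≤ l2norm v := Real.sqrt_nonneg _

@[simp]
lemma l2norm_zero {k : ℕ} : l2norm (0 : Fin k → ℝ) = 0 := by simp [l2norm]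

lemma l2norm_eq_norm {k : ℕ} (v : Fin k → ℝ) : l2norm v = ‖WithLp.toLp 2 v‖ := by
  simp [l2norm, EuclideanSpace.norm_eq]

lemma l2norm_smul {k : ℕ} (a : ℝ) (v : Fin k → ℝ) : l2norm (a • v) = |a| * l2norm v := by
  rw [l2norm_eq_norm, l2norm_eq_norm, WithLp.toLp_smul, norm_smul, Real.norm_eq_abs]

lemma l2norm_le_sum_abs {k : ℕ} (v : Fin k → ℝ) : l2norm v ≤ ∑ i, |v i| := by
  calc l2norm v ≤ Real.sqrt ((∑ i, |v i|) ^ 2) := by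
        refine Real.sqrt_le_sqrt ?_
        simpa [sq_abs] using Finset.sum_sq_le_sq_sum_of_nonneg (s := Finset.univ)
          (f := fun i => |v i|) fun i _ => abs_nonneg _
    _ = ∑ i, |v i| := Real.sqrt_sq (Finset.sum_nonneg fun i _ => abs_nonneg _)

lemma continuous_l2norm {k : ℕ} : Continuous (l2norm (k := k)) := by
  unfold l2norm
  fun_prop

@[simp]
lemma dotp_zero_right {k : ℕ} (u : Fin k → ℝ) : dotp u 0 = 0 := by simp [dotp]

lemma dotp_smul_right {k : ℕ} (u v : Fin k → ℝ) (a : ℝ) : dotp u (a • v) = a * dotp u v := by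
  simp only [dotp, Pi.smul_apply, smul_eq_mul, Finset.mul_sum]
  exact Finset.sum_congr rfl fun i _ => by ring

lemma dotp_sub_left {k : ℕ} (u u' v : Fin k → ℝ) : dotp (u - u') v = dotp u v - dotp u' v := by
  simp [dotp, sub_mul, Finset.sum_sub_distrib]

lemma dotp_le_of_l2norm_le {k : ℕ} (u : Fin k → ℝ) {v : Fin k → ℝ} {s : ℝ} (hv : l2norm v ≤ s) :
    dotp u v ≤ l2norm u * s := by
  calc dotp u v ≤ l2norm u * l2norm v := by
        simpa [l2norm, dotp] using Real.sum_mul_le_sqrt_mul_sqrt Finset.univ u v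
    _ ≤ l2norm u * s := mul_le_mul_of_nonneg_left hv (l2norm_nonneg u)

lemma continuous_of_le_add_mul_l2norm {k : ℕ} {f : (Fin k → ℝ) → ℝ} (K : ℝ)
    (hf : ∀ e e', f e ≤ f e' + K * l2norm (e - e')) : Continuous f := by
  have hlip : LipschitzWith K.toNNReal (f ∘ WithLp.ofLp (p := 2)) :=
    LipschitzWith.of_le_add_mul' K fun x y => by
      simpa [dist_eq_norm, l2norm_eq_norm] using hf x.ofLp y.ofLp
  exact hlip.continuous.comp (PiLp.continuous_toLp 2 _)

lemma ENNReal.toReal_le_of_le_ofReal_mul_add {x y z : ℝ≥0∞} {a b : ℝ}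
    (hle : x ≤ ENNReal.ofReal a * y + ENNReal.ofReal b * z) (hy : y ≠ ⊤) (hz : z ≠ ⊤)
    (ha : 0 ≤ a) (hb : 0 ≤ b) : x ≠ ⊤ ∧ x.toReal ≤ a * y.toReal + b * z.toReal := by
  have hfin : ENNReal.ofReal a * y + ENNReal.ofReal b * z ≠ ⊤ := by finiteness
  refine ⟨ne_top_of_le_ne_top hfin hle, ?_⟩
  have := ENNReal.toReal_mono hfin hle
  rwa [ENNReal.toReal_add (by finiteness) (by finiteness), ENNReal.toReal_mul, ENNReal.toReal_mul,
    ENNReal.toReal_ofReal ha, ENNReal.toReal_ofReal hb] at this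

lemma EReal.sSup_eq_coe_of_forall_le {S : Set EReal} {r : ℝ} (hle : ∀ x ∈ S, x ≤ r)
    (hne : ∃ x ∈ S, x ≠ ⊥) (hleast : ∀ q : ℝ, (∀ x ∈ S, x ≤ q) → r ≤ q) : sSup S = r := by
  refine le_antisymm (sSup_le hle) (le_sSup_iff.2 fun b hb => ?_)
  induction b using EReal.rec with
  | bot =>
    obtain ⟨x, hx, hx_ne⟩ := hne
    exact absurd (le_bot_iff.1 (hb hx)) hx_ne
  | coe q => exact EReal.coe_le_coe_iff.2 (hleast q hb)
  | top => exact le_top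

lemma EReal.coe_sub_coe_ennreal (a : ℝ) {y : ℝ≥0∞} (hy : y ≠ ⊤) :
    (a : EReal) - y = ((a - y.toReal : ℝ) : EReal) := by
  rw [EReal.coe_sub, EReal.coe_ennreal_toReal hy]

lemma integrable_l2norm_pi_gaussianReal (n : ℕ) (μ : ℝ) (v : ℝ≥0) :
    Integrable l2norm (Measure.pi fun _ : Fin n => gaussianReal μ v) := by
  have hcoord (i : Fin n) : Integrable (fun x : Fin n → ℝ => |x i|)
      (Measure.pi fun _ : Fin n => gaussianReal μ v) :=
    (((memLp_id_gaussianReal 1).comp_measurePreserving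
      (measurePreserving_eval _ i)).integrable le_rfl).abs
  refine (integrable_finsetSum Finset.univ fun i _ => hcoord i).mono' ?_ (ae_of_all _ fun x => ?_)
  · exact continuous_l2norm.aestronglyMeasurable
  · rw [Real.norm_of_nonneg (l2norm_nonneg x)]
    exact l2norm_le_sum_abs x

section supShifted

variable {n p : ℕ} (X : Matrix (Fin n) (Fin p) ℝ) (bs : Fin p → ℝ) (h : (Fin p → ℝ) → ℝ≥0∞)

lemma le_supShifted {e : Fin n → ℝ} {s : ℝ} {b : Fin p → ℝ}
    (hb : l2norm (X.mulVec (b - bs)) ≤ s) (hb_fin : h b ≠ ⊤) :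
    dotp e (X.mulVec (b - bs)) + (h bs).toReal - (h b).toReal ≤ supShifted X bs h e s := by
  refine le_csSup ⟨l2norm e * s + (h bs).toReal, ?_⟩ ⟨b, hb, hb_fin, rfl⟩
  rintro _ ⟨b, hb, -, rfl⟩
  linarith [dotp_le_of_l2norm_le e hb, (h b).toReal_nonneg]

variable {X bs h}

lemma supShifted_le (hfin : h bs ≠ ⊤) {e : Fin n → ℝ} {s c : ℝ} (hs : 0 ≤ s)
    (H : ∀ b, l2norm (X.mulVec (b - bs)) ≤ s → h b ≠ ⊤ →
      dotp e (X.mulVec (b - bs)) + (h bs).toReal - (h b).toReal ≤ c) :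
    supShifted X bs h e s ≤ c :=
  csSup_le ⟨_, bs, by simpa using hs, hfin, rfl⟩ fun _ ⟨b, hb, hb_fin, hx⟩ => hx ▸ H b hb hb_fin

lemma supShifted_nonneg (hfin : h bs ≠ ⊤) (e : Fin n → ℝ) {s : ℝ} (hs : 0 ≤ s) :
    0 ≤ supShifted X bs h e s := by
  simpa using le_supShifted X bs h (e := e) (b := bs) (by simpa using hs) hfin

lemma supShifted_le_l2norm_mul_add (hfin : h bs ≠ ⊤) (e : Fin n → ℝ) {s : ℝ} (hs : 0 ≤ s) :
    supShifted X bs h e s ≤ l2norm e * s + (h bs).toReal :=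
  supShifted_le hfin hs fun b hb _ => by
    linarith [dotp_le_of_l2norm_le e hb, (h b).toReal_nonneg]

lemma supShifted_le_add_mul_l2norm_sub (hfin : h bs ≠ ⊤) (e e' : Fin n → ℝ) {s : ℝ}
    (hs : 0 ≤ s) : supShifted X bs h e s ≤ supShifted X bs h e' s + s * l2norm (e - e') :=
  supShifted_le hfin hs fun b hb hb_fin => by
    have h_diff := dotp_le_of_l2norm_le (e - e') hb
    rw [dotp_sub_left] at h_diff
    linarith [le_supShifted X bs h (e := e') hb hb_fin]

lemma continuous_supShifted (hfin : h bs ≠ ⊤) {s : ℝ} (hs : 0 ≤ s) :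
    Continuous fun e : Fin n → ℝ => supShifted X bs h e s :=
  continuous_of_le_add_mul_l2norm s fun e e' => supShifted_le_add_mul_l2norm_sub hfin e e' hs

lemma mul_supShifted_le
    (hconv : ∀ b₁ b₂ : Fin p → ℝ, ∀ a : ℝ, 0 ≤ a → a ≤ 1 →
      h (a • b₁ + (1 - a) • b₂) ≤ ENNReal.ofReal a * h b₁ + ENNReal.ofReal (1 - a) * h b₂)
    (hfin : h bs ≠ ⊤) (e : Fin n → ℝ) {s t : ℝ} (hs : 0 < s) (hst : s ≤ t) :
    s * supShifted X bs h e t ≤ t * supShifted X bs h e s := by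
  have ht : 0 < t := hs.trans_le hst
  rw [← le_div_iff₀' hs]
  refine supShifted_le hfin ht.le fun b hb hb_fin => ?_
  set a := s / t
  have ha₀ : 0 ≤ a := by positivity
  have ha₁ : a ≤ 1 := div_le_one_of_le₀ hst ht.le
  obtain ⟨hb'_fin, hb'_le⟩ := ENNReal.toReal_le_of_le_ofReal_mul_add (hconv b bs a ha₀ ha₁)
    hb_fin hfin ha₀ (sub_nonneg.2 ha₁)
  have hshift : a • b + (1 - a) • bs - bs = a • (b - bs) := by module
  have hb'_norm : l2norm (X.mulVec (a • b + (1 - a) • bs - bs)) ≤ s := by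
    rw [hshift, Matrix.mulVec_smul, l2norm_smul, abs_of_nonneg ha₀]
    calc a * l2norm (X.mulVec (b - bs)) ≤ a * t := mul_le_mul_of_nonneg_left hb ha₀
      _ = s := div_mul_cancel₀ s ht.ne'
  have hb' := le_supShifted X bs h (e := e) hb'_norm hb'_fin
  rw [hshift, Matrix.mulVec_smul, dotp_smul_right] at hb'
  have hscaled : a * (dotp e (X.mulVec (b - bs)) + (h bs).toReal - (h b).toReal)
      ≤ supShifted X bs h e s := by linarith
  rwa [div_mul_eq_mul_div, div_le_iff₀ ht, mul_comm _ t, ← le_div_iff₀' hs] at hscaled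

lemma tcrit_eq_zero (hfin : h bs ≠ ⊤) : tcrit X bs h = 0 := by
  have hlb : ∀ r ∈ {r : ℝ | ∃ b, h b ≠ ⊤ ∧ r = l2norm (X.mulVec (b - bs))}, 0 ≤ r := by
    rintro _ ⟨b, -, rfl⟩
    exact l2norm_nonneg _
  exact le_antisymm (csInf_le ⟨0, hlb⟩ ⟨bs, hfin, by simp⟩) (le_csInf ⟨0, bs, hfin, by simp⟩ hlb)

lemma Fval_eq (hfin : h bs ≠ ⊤) (e : Fin n → ℝ) {t : ℝ} (ht : 0 ≤ t) :
    Fval X bs h e t = ((supShifted X bs h e t - (h bs).toReal - t ^ 2 / 2 : ℝ) : EReal) := by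
  rw [Fval, EReal.sSup_eq_coe_of_forall_le (r := supShifted X bs h e t - (h bs).toReal),
    ← EReal.coe_sub]
  · rintro _ ⟨b, hb, rfl⟩
    by_cases hb_fin : h b = ⊤
    · simp [hb_fin, EReal.sub_top]
    · rw [EReal.coe_sub_coe_ennreal _ hb_fin, EReal.coe_le_coe_iff]
      linarith [le_supShifted X bs h (e := e) hb hb_fin]
  · exact ⟨_, ⟨bs, by simpa using ht, rfl⟩, by simp [hfin]⟩
  · intro q hq
    suffices supShifted X bs h e t ≤ q + (h bs).toReal by linarith
    refine supShifted_le hfin ht fun b hb hb_fin => ?_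
    have := hq _ ⟨b, hb, rfl⟩
    rw [EReal.coe_sub_coe_ennreal _ hb_fin, EReal.coe_le_coe_iff] at this
    linarith

end supShifted

section expectation

variable {n p : ℕ} {X : Matrix (Fin n) (Fin p) ℝ} {bs : Fin p → ℝ} {h : (Fin p → ℝ) → ℝ≥0∞}
  {Ω : Type*} [MeasurableSpace Ω] {P : Measure Ω} {ε : Ω → Fin n → ℝ}

lemma integrable_supShifted_comp [IsFiniteMeasure P] (hfin : h bs ≠ ⊤) (hε : AEMeasurable ε P)
    (hnorm : Integrable (fun ω => l2norm (ε ω)) P) {t : ℝ} (ht : 0 ≤ t) :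
    Integrable (fun ω => supShifted X bs h (ε ω) t) P :=
  ((hnorm.mul_const t).add (integrable_const _)).mono'
    ((continuous_supShifted hfin ht).measurable.comp_aemeasurable hε).aestronglyMeasurable
    (ae_of_all _ fun ω => by
      rw [Real.norm_of_nonneg (supShifted_nonneg hfin _ ht)]
      exact supShifted_le_l2norm_mul_add hfin _ ht)

lemma fInt_eq [IsProbabilityMeasure P] (hfin : h bs ≠ ⊤) {t : ℝ} (ht : 0 ≤ t)
    (hint : Integrable (fun ω => supShifted X bs h (ε ω) t) P) :
    fInt X bs h P ε t =
      ((∫ ω, supShifted X bs h (ε ω) t ∂P - (h bs).toReal - t ^ 2 / 2 : ℝ) : EReal) := by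
  rw [fInt, tcrit_eq_zero hfin, if_neg ht.not_gt]
  simp_rw [Fval_eq hfin _ ht, EReal.toReal_coe]
  congr 1
  rw [integral_sub (f := fun ω => supShifted X bs h (ε ω) t - (h bs).toReal)
    (hint.sub (integrable_const _)) (integrable_const _), integral_sub hint (integrable_const _)]
  simp

end expectation

theorem tf_upper_bound_general {n p : ℕ} (X : Matrix (Fin n) (Fin p) ℝ) (bs : Fin p → ℝ)
    (h : (Fin p → ℝ) → ℝ≥0∞)
    (hconv : ∀ b₁ b₂ : Fin p → ℝ, ∀ a : ℝ, 0 ≤ a → a ≤ 1 →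
      h (a • b₁ + (1 - a) • b₂) ≤ ENNReal.ofReal a * h b₁ + ENNReal.ofReal (1 - a) * h b₂)
    (hfin : h bs ≠ ⊤)
    {Ω : Type*} [MeasurableSpace Ω] (P : Measure Ω) [IsProbabilityMeasure P]
    (σ : ℝ≥0) (ε : Ω → Fin n → ℝ) (hmeas : Measurable ε)
    (hgauss : Measure.map ε P = Measure.pi fun _ : Fin n => gaussianReal 0 (σ ^ 2))
    (tf : ℝ) (htf : ∀ t : ℝ, fInt X bs h P ε t ≤ fInt X bs h P ε tf)
    (s : ℝ) (hspos : 0 < s)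
    (hkey : (∫ ω, supShifted X bs h (ε ω) s ∂P) ≤ s ^ 2) :
    tf ≤ s := by
  by_contra! hlt
  have htf_pos : 0 ≤ tf := (hspos.trans hlt).le
  have hnorm : Integrable (fun ω => l2norm (ε ω)) P := by
    have hpi := integrable_l2norm_pi_gaussianReal n 0 (σ ^ 2)
    rw [← hgauss] at hpi
    exact (integrable_map_measure hpi.aestronglyMeasurable hmeas.aemeasurable).1 hpi
  have hQ {t : ℝ} (ht : 0 ≤ t) :=
    integrable_supShifted_comp (X := X) hfin hmeas.aemeasurable hnorm ht
  have hmax := htf s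
  rw [fInt_eq hfin hspos.le (hQ hspos.le), fInt_eq hfin htf_pos (hQ htf_pos),
    EReal.coe_le_coe_iff] at hmax
  have hscale : s * ∫ ω, supShifted X bs h (ε ω) tf ∂P
      ≤ tf * ∫ ω, supShifted X bs h (ε ω) s ∂P := by
    rw [← integral_const_mul, ← integral_const_mul]
    exact integral_mono ((hQ htf_pos).const_mul s) ((hQ hspos.le).const_mul tf)
      fun ω => mul_supShifted_le hconv hfin (ε ω) hspos hlt.le
  nlinarith [mul_le_mul_of_nonneg_left hmax hspos.le,
    mul_le_mul_of_nonneg_left hkey (sub_nonneg.2 hlt.le), mul_pos hspos (mul_pos (sub_pos.2 hlt) (sub_pos.2 hlt))]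

/-- if `E[sup_{‖X(β-β*)‖≤s} (εᵀX(β-β*) + h(β*) - h(β))] ≤ s²` for some
`s > 0` (equivalently `f(s) + h(β*) ≤ s²`), then the unique maximizer `t_f` of
`f = E[F(·)]` satisfies `t_f ≤ s`. -/
theorem tf_upper_bound {n p : ℕ} (X : Matrix (Fin n) (Fin p) ℝ) (bs : Fin p → ℝ)
    (h : (Fin p → ℝ) → ℝ≥0∞)
    (hconv : ∀ b₁ b₂ : Fin p → ℝ, ∀ a : ℝ, 0 ≤ a → a ≤ 1 →
      h (a • b₁ + (1 - a) • b₂) ≤ ENNReal.ofReal a * h b₁ + ENNReal.ofReal (1 - a) * h b₂)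
    (hattained : ∃ b₀ : Fin p → ℝ, h b₀ ≠ ⊤ ∧
      l2norm (X.mulVec (b₀ - bs)) = tcrit X bs h)
    (hfin : h bs ≠ ⊤)
    {Ω : Type*} [MeasurableSpace Ω] (P : Measure Ω) [IsProbabilityMeasure P]
    (σ : ℝ≥0) (hσ : 0 < σ) (ε : Ω → Fin n → ℝ) (hmeas : Measurable ε)
    (hgauss : Measure.map ε P = Measure.pi fun _ : Fin n => gaussianReal 0 (σ ^ 2))
    (tf : ℝ) (htf : ∀ t : ℝ, fInt X bs h P ε t ≤ fInt X bs h P ε tf)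
    (s : ℝ) (hspos : 0 < s)
    (hkey : (∫ ω, supShifted X bs h (ε ω) s ∂P) ≤ s ^ 2) :
    tf ≤ s :=
  tf_upper_bound_general X bs h hconv hfin P σ ε hmeas hgauss tf htf s hspos hkey
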